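/- On the Hirzebruch surface $Y = \mathbb{F}_e$ with $H = aC_0 + bf$, $a \geq 1$, $b \geq ae+1$, the vanishing $H^1(Y, \mathcal{O}_Y(-H - K_Y)) = 0$ holds in each of the following cases: (i) $a = 1$ and $b \leq 3$; (ii) $a = 2$ and $b \leq e+3$; (iii) $a = 3$; (iv) $a \geq 4$ and $b \geq ae - 2e + 3$. -/
import Mathlib


/-!
STATEMENT 5. On `Y = 𝔽_e` with `H = aC₀+bf`, `a ≥ 1`, `b ≥ ae+1`:
`H¹(Y, 𝒪_Y(-H - K_Y)) = 0` in the cases (i) `a = 1, b ≤ 3`; (ii) `a = 2, b ≤ e+3`;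
(iii) `a = 3`; (iv) `a ≥ 4, b ≥ ae - 2e + 3`.  Here `-H-K_Y = (2-a)C₀+(e+2-b)f`.
-/

/-- `h0P1 n` is the dimension of `H⁰(ℙ¹, 𝒪(n))`. -/
def h0P1 (n : ℤ) : ℕ := (n + 1).toNat

/-- `h1P1 n` is the dimension of `H¹(ℙ¹, 𝒪(n))`. -/
def h1P1 (n : ℤ) : ℕ := (-n - 1).toNat

/-- `h0F e a b` is the dimension of `H⁰(𝔽_e, 𝒪(a C₀ + b f))`, computed through the
pushforward `p_* 𝒪(aC₀+bf) = ⊕_{k=0}^{a} 𝒪_{ℙ¹}(b - ke)` (which vanishes for `a < 0`). -/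
def h0F (e a b : ℤ) : ℕ :=
  if a < 0 then 0 else ∑ k ∈ Finset.range (a.toNat + 1), h0P1 (b - (k : ℤ) * e)

/-- `h2F e a b` is the dimension of `H²(𝔽_e, 𝒪(aC₀+bf))`, computed by Serre duality
with `K = -2C₀ - (e+2)f`. -/
def h2F (e a b : ℤ) : ℕ := h0F e (-2 - a) (-(e + 2) - b)

/-- Euler characteristic `χ(𝒪(aC₀+bf)) = 1 + ab + a + b - e·a(a+1)/2` (Riemann–Roch). -/
def chiF (e a b : ℤ) : ℤ := 1 + a * b + a + b - e * (a * (a + 1)) / 2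

/-- `h1F e a b` is the dimension of `H¹(𝔽_e, 𝒪(aC₀+bf))`, via `χ = h⁰ - h¹ + h²`. -/
def h1F (e a b : ℤ) : ℕ := ((h0F e a b : ℤ) + (h2F e a b : ℤ) - chiF e a b).toNat

lemma sum2 (e b : ℤ) (he : 0 ≤ e) :
    ∀ n : ℕ, (n : ℤ) * e ≤ b + 1 →
      2 * (∑ k ∈ Finset.range (n + 1), (h0P1 (b - (k : ℤ) * e) : ℤ))
        = 2 * ((n : ℤ) + 1) * (b + 1) - e * n * (n + 1) := by
  intro n
  induction n with
  | zero =>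
    intro h
    norm_num [h0P1]
    push_cast at h
    linarith
  | succ n ih =>
    intro h
    have hn : (n : ℤ) * e ≤ b + 1 := by
      have : (n : ℤ) * e ≤ ((n : ℤ) + 1) * e := by nlinarith [Nat.cast_nonneg (α := ℤ) n]
      push_cast at h; linarith
    rw [Finset.sum_range_succ, mul_add, ih hn]
    have hterm : ((h0P1 (b - ((n + 1 : ℕ) : ℤ) * e)) : ℤ) = b - ((n : ℤ) + 1) * e + 1 := by
      unfold h0P1
      push_cast at h ⊢
      rw [Int.toNat_of_nonneg (by linarith)]
    rw [hterm]
    push_cast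
    ring

theorem stmt5 (e a b : ℤ) (he : 0 ≤ e) (ha : 1 ≤ a) (hb : a * e + 1 ≤ b)
    (hcase : (a = 1 ∧ b ≤ 3) ∨ (a = 2 ∧ b ≤ e + 3) ∨ a = 3 ∨ (4 ≤ a ∧ a * e - 2 * e + 3 ≤ b)) :
    h1F e (2 - a) (e + 2 - b) = 0 := by
  rw [h1F, Int.toNat_eq_zero]
  rcases hcase with ⟨rfl, hb3⟩ | ⟨rfl, hb3⟩ | rfl | ⟨ha4, hb3⟩
  · norm_num [h2F, h0F, chiF, h0P1, Finset.sum_range_succ]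
    omega
  · norm_num [h2F, h0F, chiF, h0P1, Finset.sum_range_succ]
    omega
  · norm_num [h2F, h0F, chiF, h0P1]
  · -- a ≥ 4
    have h1 : h0F e (2 - a) (e + 2 - b) = 0 := by rw [h0F, if_pos]; omega
    have h2 : h2F e (2 - a) (e + 2 - b) = h0F e (a - 4) (b - 2 * e - 4) := by
      rw [h2F]; congr 1 <;> ring
    rw [h1, h2]
    set n : ℕ := (a - 4).toNat with hn
    have hna : (n : ℤ) = a - 4 := Int.toNat_of_nonneg (by omega)
    have h3 : h0F e (a - 4) (b - 2 * e - 4)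
        = ∑ k ∈ Finset.range (n + 1), h0P1 (b - 2 * e - 4 - (k : ℤ) * e) := by
      rw [h0F, if_neg (by omega)]
    have hs := sum2 e (b - 2 * e - 4) he n (by rw [hna]; nlinarith)
    have hcast : ((∑ k ∈ Finset.range (n + 1), h0P1 (b - 2 * e - 4 - (k : ℤ) * e) : ℕ) : ℤ)
        = ∑ k ∈ Finset.range (n + 1), ((h0P1 (b - 2 * e - 4 - (k : ℤ) * e)) : ℤ) := by
      push_cast; rfl
    have hev : (2 : ℤ) ∣ (2 - a) * (2 - a + 1) := by
      rcases Int.even_mul_succ_self (2 - a) with ⟨c, hc⟩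
      exact ⟨c, by linarith⟩
    have hchi : 2 * chiF e (2 - a) (e + 2 - b)
        = 2 * (1 + (2 - a) * (e + 2 - b) + (2 - a) + (e + 2 - b)) - e * ((2 - a) * (3 - a)) := by
      rw [chiF]
      rcases hev with ⟨c, hc⟩
      rw [show (2 - a) * (2 - a + 1) = 2 * c by linarith]
      rw [Int.mul_ediv_assoc e ⟨c, by ring⟩]
      rw [Int.mul_ediv_cancel_left c two_ne_zero]
      linear_combination e * hc
    rw [h3]
    have key : 2 * ((∑ k ∈ Finset.range (n + 1), h0P1 (b - 2 * e - 4 - (k : ℤ) * e) : ℕ) : ℤ)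
        ≤ 2 * chiF e (2 - a) (e + 2 - b) := by
      rw [hcast, hs, hchi, hna]
      nlinarith
    omega
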